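/- Let σ > 0, λ > 0, and let r, t ∈ ℝ satisfy |r·t| ≤ π. Define Υ(s) = 3·e^{−irs + (λ−σ²)s²/2} − 2 for s ∈ ℝ (this is Υ(s;r,λ) = 3·e^{−irs+λs²/2}·φ(s) − 2 with φ(s) = e^{−σ²s²/2}). Then max{ |Υ(t)|, |Υ(t)² − Υ(2t)| + |Υ(t)|² } ≥ 1 + (r·t/π)⁴. -/

import Mathlib

/-!
With `R = exp ((λ - σ²) t² / 2)`, `x = r t` and `d = 1 - cos x` one has
`|Υ(t)|² = (3R - 2)² + 12 R d`, and `Re (Υ(t)² - Υ(2t)) + |Υ(t)|² - 1 - d²/4` is the polynomial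
`-3 (R - 1)³ (R + 3) + 12 R (R - 1)² (R + 2) d + (18 R² - 6 R⁴ - 1/4) d²`, which is nonnegative for
`R ∈ [1/4, 1]`. If `|Υ(t)| < 1 + d²/4`, the formula for `|Υ(t)|²` forces `d ≤ 1/4` and then
`R ∈ [1/4, 1]`; so one of the two quantities is at least `1 + d²/4`, and Jordan's inequality
`1 - cos x ≥ 2 x² / π²` turns `d²/4` into `(x / π)⁴`.
-/

open Real

/-- `Υ(s;r,λ)` with `φ(s) = e^{−σ²s²/2}`, i.e. `Υ(s) = 3·e^{−irs + (λ−σ²)s²/2} − 2`. -/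
noncomputable def UpsGauss (σ lam r : ℝ) (s : ℝ) : ℂ :=
  3 * Complex.exp (-(Complex.I * (r : ℂ) * (s : ℂ)) +
        (((lam - σ ^ 2) * s ^ 2 / 2 : ℝ) : ℂ)) - 2

open Complex in
lemma UpsGauss_eq (σ lam r s : ℝ) :
    UpsGauss σ lam r s = 3 * cexp (((lam - σ ^ 2) * s ^ 2 / 2 : ℝ) - (r * s : ℝ) * I) - 2 := by
  unfold UpsGauss
  push_cast
  ring_nf

lemma div_pi_pow_four_le {x : ℝ} (hx : |x| ≤ π) : (x / π) ^ 4 ≤ (1 - cos x) ^ 2 / 4 := by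
  have h := cos_le_one_sub_mul_cos_sq hx
  calc (x / π) ^ 4 = (2 / π ^ 2 * x ^ 2) ^ 2 / 4 := by ring
    _ ≤ (1 - cos x) ^ 2 / 4 := by gcongr; linarith

lemma quartic_polynomial_nonneg {R d : ℝ} (hR₀ : 1 / 4 ≤ R) (hR₁ : R ≤ 1) (hd : 0 ≤ d) :
    0 ≤ -3 * (R - 1) ^ 3 * (R + 3) + 12 * R * (R - 1) ^ 2 * (R + 2) * d
      + (18 * R ^ 2 - 6 * R ^ 4 - 1 / 4) * d ^ 2 := by
  have h₀ : 0 ≤ -3 * (R - 1) ^ 3 * (R + 3) := by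
    have : 0 ≤ (1 - R) ^ 3 := pow_nonneg (by linarith) 3
    nlinarith
  have h₁ : 0 ≤ 12 * R * (R - 1) ^ 2 * (R + 2) * d := by positivity
  have h₂ : 0 ≤ 18 * R ^ 2 - 6 * R ^ 4 - 1 / 4 := by
    nlinarith [mul_le_mul hR₁ hR₁ (by linarith) zero_le_one]
  nlinarith [mul_nonneg h₂ (sq_nonneg d)]

lemma mem_Icc_of_sq_add_le {R d : ℝ} (hR : 0 < R) (hd₀ : 0 ≤ d) (hd₂ : d ≤ 2)
    (h : (3 * R - 2) ^ 2 + 12 * R * d ≤ (1 + d ^ 2 / 4) ^ 2) :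
    R ∈ Set.Icc (1 / 4) 1 := by
  have hd₁ : d < 1 := by
    have : (1 + d ^ 2 / 4) ^ 2 ≤ 2 ^ 2 := by gcongr; nlinarith
    nlinarith
  have hd : d ≤ 1 / 4 := by
    -- minimizing over `R` gives `(3R - 2)² + 12 R d ≥ 8 d - 4 d²`, too large for `d ∈ (1/4, 1)`
    have : (1 + d ^ 2 / 4) ^ 2 ≤ (5 / 4) ^ 2 := by gcongr; nlinarith
    nlinarith [sq_nonneg (3 * R - 2 + 2 * d)]
  have hsq : d ^ 2 ≤ d / 4 := by nlinarith
  have hR₀ : 1 / 4 ≤ R := by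
    have : (1 + d ^ 2 / 4) ^ 2 ≤ (65 / 64) ^ 2 := by gcongr; nlinarith
    nlinarith
  refine ⟨hR₀, ?_⟩
  have : (1 + d ^ 2 / 4) ^ 2 ≤ 1 + 3 * d := by
    have : (d ^ 2) ^ 2 ≤ (d / 4) ^ 2 := by gcongr
    nlinarith
  nlinarith

section

open Complex

lemma re_three_mul_exp_sub_two (a x : ℝ) :
    (3 * cexp (a - x * I) - 2).re = 3 * rexp a * Real.cos x - 2 := by
  simp [exp_re, mul_assoc]

lemma im_three_mul_exp_sub_two (a x : ℝ) :
    (3 * cexp (a - x * I) - 2).im = -(3 * rexp a * Real.sin x) := by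
  simp [exp_im, mul_assoc]

lemma sq_norm_three_mul_exp_sub_two (a x : ℝ) :
    ‖3 * cexp (a - x * I) - 2‖ ^ 2 = 9 * rexp a ^ 2 - 12 * rexp a * Real.cos x + 4 := by
  rw [Complex.sq_norm, normSq_apply, re_three_mul_exp_sub_two, im_three_mul_exp_sub_two]
  linear_combination (9 * rexp a ^ 2) * Real.sin_sq_add_cos_sq x

lemma re_sq_sub_three_mul_exp_sub_two (a x : ℝ) :
    ((3 * cexp (a - x * I) - 2) ^ 2 - (3 * cexp ((4 * a : ℝ) - (2 * x : ℝ) * I) - 2)).re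
      = (9 * rexp a ^ 2 - 3 * rexp a ^ 4) * (2 * Real.cos x ^ 2 - 1)
        - 12 * rexp a * Real.cos x + 6 := by
  have h4 : rexp (4 * a) = rexp a ^ 4 := by rw [← Real.exp_nat_mul]; norm_num
  rw [sub_re, sq, mul_re, re_three_mul_exp_sub_two, im_three_mul_exp_sub_two,
    re_three_mul_exp_sub_two, h4, Real.cos_two_mul]
  linear_combination (-9 * rexp a ^ 2) * Real.sin_sq_add_cos_sq x

theorem quartic_gap_one_sub_cos (a x : ℝ) :
    1 + (1 - Real.cos x) ^ 2 / 4 ≤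
      max ‖3 * cexp (a - x * I) - 2‖
        (‖(3 * cexp (a - x * I) - 2) ^ 2 - (3 * cexp ((4 * a : ℝ) - (2 * x : ℝ) * I) - 2)‖ +
          ‖3 * cexp (a - x * I) - 2‖ ^ 2) := by
  set u := 3 * cexp (a - x * I) - 2
  set d := 1 - Real.cos x
  rcases le_or_gt (1 + d ^ 2 / 4) ‖u‖ with hu | hu
  · exact le_max_of_le_left hu
  refine le_max_of_le_right ?_
  have hsq : ‖u‖ ^ 2 ≤ (1 + d ^ 2 / 4) ^ 2 := pow_le_pow_left₀ (norm_nonneg u) hu.le 2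
  rw [sq_norm_three_mul_exp_sub_two] at hsq ⊢
  obtain ⟨hR₀, hR₁⟩ := mem_Icc_of_sq_add_le (d := d) (exp_pos a)
    (by linarith [Real.cos_le_one x]) (by linarith [Real.neg_one_le_cos x]) (by linarith)
  calc 1 + d ^ 2 / 4
      ≤ (9 * rexp a ^ 2 - 3 * rexp a ^ 4) * (2 * Real.cos x ^ 2 - 1) - 12 * rexp a * Real.cos x + 6
        + (9 * rexp a ^ 2 - 12 * rexp a * Real.cos x + 4) := by
        linarith [quartic_polynomial_nonneg hR₀ hR₁ (by linarith [Real.cos_le_one x] : 0 ≤ d)]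
    _ ≤ _ := by
        gcongr
        rw [← re_sq_sub_three_mul_exp_sub_two]
        exact re_le_norm _

end

theorem quartic_gap_general (σ lam r t : ℝ) (hrt : |r * t| ≤ π) :
    1 + (r * t / π) ^ 4 ≤
      max ‖UpsGauss σ lam r t‖
        (‖(UpsGauss σ lam r t) ^ 2 - UpsGauss σ lam r (2 * t)‖ +
          ‖UpsGauss σ lam r t‖ ^ 2) := by
  have h2t : UpsGauss σ lam r (2 * t) = 3 * Complex.exp
      (((4 * ((lam - σ ^ 2) * t ^ 2 / 2)) : ℝ) - ((2 * (r * t)) : ℝ) * Complex.I) - 2 := by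
    rw [UpsGauss_eq]; ring_nf
  rw [h2t, UpsGauss_eq]
  linarith [div_pi_pow_four_le hrt,
    quartic_gap_one_sub_cos ((lam - σ ^ 2) * t ^ 2 / 2) (r * t)]

/-- Quartic gap (Lemma 4.3): for any `σ² > 0`, `λ > 0` and `|rt| ≤ π`,
`max{|Υ(t)|, |Υ(t)² − Υ(2t)| + |Υ(t)|²} ≥ 1 + (rt/π)⁴`. -/
theorem quartic_gap (σ lam r t : ℝ) (hσ : 0 < σ) (hlam : 0 < lam)
    (hrt : |r * t| ≤ π) :
    1 + (r * t / π) ^ 4 ≤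
      max ‖UpsGauss σ lam r t‖
        (‖(UpsGauss σ lam r t) ^ 2 - UpsGauss σ lam r (2 * t)‖ +
          ‖UpsGauss σ lam r t‖ ^ 2) :=
  quartic_gap_general σ lam r t hrt
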